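/- arXiv:1212.5525 — 4 statements merged into one kernel-verified Lean document; each statement's English description precedes it below -/
import Mathlib

section
/- If A ∈ Rmax^{n×n} is nilpotent (there exists a positive integer p0 with A^{⊗p} equal to the all-(-∞) matrix for all p ≥ p0), then A^{⊗n} is the all-(-∞) matrix; in particular one may take p0 ≤ n. -/
/-- The max-plus semiring carrier: ℝ ∪ {-∞}. -/
abbrev Rmax := WithBot ℝ

/-- Max-plus matrix product: [A ⊗ B]_{ij} = max_k ([A]_{ik} + [B]_{kj}). -/
def mpMul {m n p : ℕ} (A : Matrix (Fin m) (Fin n) Rmax)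
    (B : Matrix (Fin n) (Fin p) Rmax) : Matrix (Fin m) (Fin p) Rmax :=
  fun i j => Finset.univ.sup fun k => A i k + B k j

/-- Max-plus identity matrix. -/
def mpId (n : ℕ) : Matrix (Fin n) (Fin n) Rmax :=
  fun i j => if i = j then (0 : Rmax) else ⊥

/-- Max-plus matrix power. -/
def mpPow {n : ℕ} (A : Matrix (Fin n) (Fin n) Rmax) : ℕ → Matrix (Fin n) (Fin n) Rmax
  | 0 => mpId n
  | p + 1 => mpMul A (mpPow A p)

/-- Max-plus matrix-vector product. -/
def mpMulVec {m n : ℕ} (A : Matrix (Fin m) (Fin n) Rmax) (v : Fin n → Rmax) :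
    Fin m → Rmax :=
  fun i => Finset.univ.sup fun k => A i k + v k

/-- Irreducibility: the precedence graph is strongly connected (a path between
any two distinct vertices; arc (j,i) exists iff [A]_{ij} ≠ -∞, and a path of
length p from j to i exists iff [A^{⊗p}]_{ij} ≠ -∞). -/
def mpIrreducible {n : ℕ} (A : Matrix (Fin n) (Fin n) Rmax) : Prop :=
  ∀ i j : Fin n, i ≠ j → ∃ p : ℕ, 1 ≤ p ∧ mpPow A p i j ≠ ⊥

/-!
A finite entry of `A^{⊗p}` at `(i, j)` is a walk `i → ⋯ → j` of length `p` along finite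
entries of `A`. A walk of length `n` visits `n + 1` vertices, so it repeats one and contains
a closed walk of some positive length `c`. Going around it `p₀` times gives a finite diagonal
entry of `A^{⊗p₀c}`, which is impossible when `A` is nilpotent.
-/

lemma mpMul_ne_bot_iff {m n p : ℕ} {A : Matrix (Fin m) (Fin n) Rmax}
    {B : Matrix (Fin n) (Fin p) Rmax} {i : Fin m} {j : Fin p} :
    mpMul A B i j ≠ ⊥ ↔ ∃ k, A i k ≠ ⊥ ∧ B k j ≠ ⊥ := by
  simp only [mpMul, ne_eq, Finset.sup_eq_bot_iff, Finset.mem_univ, true_implies,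
    WithBot.add_eq_bot, not_forall, not_or]

lemma mpPow_ne_bot_iff_exists_walk {n : ℕ} {A : Matrix (Fin n) (Fin n) Rmax} {p : ℕ}
    {i j : Fin n} :
    mpPow A p i j ≠ ⊥ ↔
      ∃ f : ℕ → Fin n, f 0 = i ∧ f p = j ∧ ∀ t < p, A (f t) (f (t + 1)) ≠ ⊥ := by
  induction p generalizing i with
  | zero =>
    simp only [mpPow, mpId]
    split_ifs with hij
    · exact ⟨fun _ => ⟨fun _ => i, rfl, hij, by omega⟩, fun _ => WithBot.coe_ne_bot⟩
    · exact ⟨fun h => absurd rfl h,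
        fun ⟨f, hf0, hfp, _⟩ => absurd (hf0.symm.trans hfp) hij⟩
  | succ p ih =>
    simp only [mpPow, mpMul_ne_bot_iff, ih]
    constructor
    · rintro ⟨k, hik, g, hg0, hgp, hg⟩
      refine ⟨fun t => if t = 0 then i else g (t - 1), rfl, by simp [hgp], ?_⟩
      rintro (_ | t) ht
      · simpa [hg0] using hik
      · simpa using hg t (by omega)
    · rintro ⟨f, rfl, rfl, hf⟩
      exact ⟨f 1, hf 0 p.succ_pos, fun t => f (t + 1), rfl, rfl,
        fun t ht => hf (t + 1) (by omega)⟩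

lemma mpPow_add_ne_bot {n : ℕ} {A : Matrix (Fin n) (Fin n) Rmax} {p q : ℕ} {i k j : Fin n}
    (hp : mpPow A p i k ≠ ⊥) (hq : mpPow A q k j ≠ ⊥) : mpPow A (p + q) i j ≠ ⊥ := by
  induction p generalizing i with
  | zero =>
    obtain ⟨f, rfl, rfl, -⟩ := mpPow_ne_bot_iff_exists_walk.mp hp
    simpa using hq
  | succ p ih =>
    obtain ⟨l, hil, hlk⟩ := mpMul_ne_bot_iff.mp hp
    rw [Nat.succ_add]
    exact mpMul_ne_bot_iff.mpr ⟨l, hil, ih hlk⟩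

lemma mpPow_mul_ne_bot {n : ℕ} {A : Matrix (Fin n) (Fin n) Rmax} {c : ℕ} {v : Fin n}
    (hc : mpPow A c v v ≠ ⊥) (m : ℕ) : mpPow A (m * c) v v ≠ ⊥ := by
  induction m with
  | zero => simp [mpPow, mpId]
  | succ m ih => simpa [Nat.succ_mul] using mpPow_add_ne_bot ih hc

lemma exists_cycle_of_mpPow_ne_bot {n : ℕ} {A : Matrix (Fin n) (Fin n) Rmax} {p : ℕ}
    {i j : Fin n} (hnp : n ≤ p) (hij : mpPow A p i j ≠ ⊥) :
    ∃ c, 0 < c ∧ ∃ v, mpPow A c v v ≠ ⊥ := by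
  obtain ⟨f, -, -, hf⟩ := mpPow_ne_bot_iff_exists_walk.mp hij
  have hrepeat : ∃ a b, a < b ∧ b ≤ p ∧ f a = f b := by
    obtain ⟨a, b, hab, heq⟩ :=
      Fintype.exists_ne_map_eq_of_card_lt (fun t : Fin (n + 1) => f t) (by simp)
    rcases Fin.lt_or_lt_of_ne hab with hlt | hlt
    · exact ⟨a, b, hlt, by omega, heq⟩
    · exact ⟨b, a, hlt, by omega, heq.symm⟩
  obtain ⟨a, b, hab, hbp, heq⟩ := hrepeat
  refine ⟨b - a, by omega, f a, mpPow_ne_bot_iff_exists_walk.mpr ?_⟩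
  exact ⟨fun t => f (a + t), rfl, by simp only [Nat.add_sub_cancel' hab.le, heq],
    fun t ht => hf (a + t) (by omega)⟩

/-- If A is nilpotent then already A^{⊗n} is the all-(-∞) matrix. -/
theorem mp_nilpotent_pow_n {n : ℕ} (A : Matrix (Fin n) (Fin n) Rmax)
    (h : ∃ p0 : ℕ, 0 < p0 ∧ ∀ p, p0 ≤ p → mpPow A p = fun _ _ => (⊥ : Rmax)) :
    mpPow A n = fun _ _ => (⊥ : Rmax) := by
  obtain ⟨p0, -, hnil⟩ := h
  funext i j
  by_contra hij
  obtain ⟨c, hc, v, hv⟩ := exists_cycle_of_mpPow_ne_bot le_rfl hij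
  apply mpPow_mul_ne_bot hv p0
  rw [hnil _ (Nat.le_mul_of_pos_right p0 hc)]
end

section
/- Every square matrix over Rmax with at least one entry different from -∞ in each row (or more generally every matrix over Rmax) has at least one max-plus eigenvalue: there exist λ ∈ Rmax and v ∈ Rmax^n, v not identically -∞, with A ⊗ v = λ ⊗ v. -/
open Finset

section WithBot

variable {α ι : Type*} [AddCommMonoid α] [LinearOrder α] [IsOrderedAddMonoid α]

theorem WithBot.finset_sup_add (s : Finset ι) (f : ι → WithBot α) (c : WithBot α) :
    s.sup f + c = s.sup fun k => f k + c :=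
  apply_sup_eq_sup_comp (· + c) (Monotone.map_sup fun _ _ h => add_le_add_left h c)
    (WithBot.bot_add c)

theorem WithBot.add_finset_sup (s : Finset ι) (f : ι → WithBot α) (c : WithBot α) :
    c + s.sup f = s.sup fun k => c + f k := by
  simp only [add_comm c, WithBot.finset_sup_add]

end WithBot

theorem exists_max_mean {ι : Type*} {s : Finset ι} {w : ι → ℕ} (hw : ∀ x ∈ s, 0 < w x)
    {f : ι → WithBot ℝ} (hf : ∃ x ∈ s, f x ≠ ⊥) :
    ∃ μ : ℝ, (∀ x ∈ s, f x ≤ ((w x * μ : ℝ) : WithBot ℝ)) ∧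
      ∃ x ∈ s, f x = ((w x * μ : ℝ) : WithBot ℝ) := by
  classical
  obtain ⟨x₀, hx₀, hmax⟩ := (s.filter (f · ≠ ⊥)).exists_max_image
    (fun x => (f x).unbotD 0 / w x) (by simpa [Finset.Nonempty] using hf)
  obtain ⟨hx₀s, hfx₀⟩ := mem_filter.1 hx₀
  obtain ⟨y₀, hy₀⟩ := WithBot.ne_bot_iff_exists.1 hfx₀
  refine ⟨y₀ / w x₀, fun x hx => ?_, x₀, hx₀s, ?_⟩
  · by_cases hfx : f x = ⊥
    · exact hfx ▸ bot_le
    obtain ⟨y, hy⟩ := WithBot.ne_bot_iff_exists.1 hfx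
    have hmean := hmax x (mem_filter.2 ⟨hx, hfx⟩)
    simp only [← hy, ← hy₀, WithBot.unbotD_coe] at hmean
    rw [← hy, WithBot.coe_le_coe, ← div_le_iff₀' (by exact_mod_cast hw x hx)]
    exact hmean
  · rw [← hy₀, mul_div_cancel₀ _ (by exact_mod_cast (hw x₀ hx₀s).ne')]

section MaxPlus

variable {n : ℕ}

theorem le_mpMul {m p : ℕ} (A : Matrix (Fin m) (Fin n) Rmax) (B : Matrix (Fin n) (Fin p) Rmax)
    (i : Fin m) (k : Fin n) (j : Fin p) : A i k + B k j ≤ mpMul A B i j :=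
  le_sup (f := fun k => A i k + B k j) (mem_univ k)

theorem mpMulVec_add_const {m : ℕ} (A : Matrix (Fin m) (Fin n) Rmax) (v : Fin n → Rmax)
    (c d : Rmax) (i : Fin m) :
    mpMulVec (fun i k => A i k + c) (fun k => v k + d) i = mpMulVec A v i + (c + d) := by
  simp only [mpMulVec, WithBot.finset_sup_add]
  exact sup_congr rfl fun k _ => add_add_add_comm _ _ _ _

theorem mpPow_add_const (A : Matrix (Fin n) (Fin n) Rmax) (c : ℝ) (p : ℕ) (i j : Fin n) :
    mpPow (fun i j => A i j + c) p i j = mpPow A p i j + ((p * c : ℝ) : Rmax) := by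
  induction p generalizing i j with
  | zero => simp [mpPow]
  | succ p ih =>
    calc mpPow (fun i j => A i j + c) (p + 1) i j
        = mpMulVec (fun i k => A i k + c) (fun k => mpPow A p k j + ((p * c : ℝ) : Rmax)) i := by
          simp only [← ih]; rfl
      _ = mpPow A (p + 1) i j + ((c + p * c : ℝ) : Rmax) := by
          rw [mpMulVec_add_const, ← WithBot.coe_add]; rfl
      _ = _ := by congr 2; push_cast; ring

theorem mpPow_add_le (A : Matrix (Fin n) (Fin n) Rmax) (p q : ℕ) (i k j : Fin n) :
    mpPow A p i k + mpPow A q k j ≤ mpPow A (p + q) i j := by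
  induction p generalizing i with
  | zero =>
    by_cases hik : i = k <;> simp [mpPow, mpId, hik]
  | succ p ih =>
    rw [Nat.add_right_comm]
    simp only [mpPow, mpMul, WithBot.finset_sup_add]
    exact sup_mono_fun fun m _ => (add_assoc _ _ _).trans_le (add_le_add_right (ih m) _)

def walkWeight (A : Matrix (Fin n) (Fin n) Rmax) (p : ℕ) (w : ℕ → Fin n) : Rmax :=
  ∑ t ∈ range p, A (w t) (w (t + 1))

theorem walkWeight_add (A : Matrix (Fin n) (Fin n) Rmax) (p q : ℕ) (w : ℕ → Fin n) :
    walkWeight A (p + q) w = walkWeight A p w + walkWeight A q fun t => w (p + t) :=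
  sum_range_add _ p q

theorem walkWeight_succ (A : Matrix (Fin n) (Fin n) Rmax) (p : ℕ) (w : ℕ → Fin n) :
    walkWeight A (p + 1) w = A (w 0) (w 1) + walkWeight A p fun t => w (t + 1) := by
  rw [add_comm p, walkWeight_add]
  simp [walkWeight, add_comm 1]

theorem walkWeight_le_mpPow (A : Matrix (Fin n) (Fin n) Rmax) (p : ℕ) (w : ℕ → Fin n) :
    walkWeight A p w ≤ mpPow A p (w 0) (w p) := by
  induction p generalizing w with
  | zero => simp [walkWeight, mpPow, mpId]
  | succ p ih =>
    rw [walkWeight_succ]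
    exact (add_le_add_right (ih _) _).trans (le_mpMul A (mpPow A p) _ _ _)

theorem exists_walkWeight_eq_mpPow {A : Matrix (Fin n) (Fin n) Rmax} {p : ℕ} {i j : Fin n}
    (h : mpPow A p i j ≠ ⊥) :
    ∃ w : ℕ → Fin n, w 0 = i ∧ w p = j ∧ walkWeight A p w = mpPow A p i j := by
  induction p generalizing i with
  | zero =>
    have hij : i = j := by by_contra hij; simp [mpPow, mpId, hij] at h
    exact ⟨fun _ => i, rfl, hij, by simp [walkWeight, mpPow, mpId, hij]⟩
  | succ p ih =>
    obtain ⟨k, -, hk⟩ :=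
      exists_mem_eq_sup univ ⟨i, mem_univ i⟩ fun k => A i k + mpPow A p k j
    change mpMul A (mpPow A p) i j = _ at hk
    have hkj : mpPow A p k j ≠ ⊥ := fun hb => h (by simp [mpPow, hk, hb])
    obtain ⟨w, hw0, hwp, hw⟩ := ih hkj
    refine ⟨fun t => Nat.casesOn t i w, rfl, hwp, ?_⟩
    rw [walkWeight_succ]
    simp only [mpPow, hk, ← hw0, hw]
    rfl

theorem exists_lt_le_eq (w : ℕ → Fin n) : ∃ a b, a < b ∧ b ≤ n ∧ w a = w b := by
  obtain ⟨x, y, hxy, hw⟩ := Fintype.exists_ne_map_eq_of_card_lt (fun t : Fin (n + 1) => w t)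
    (by simp)
  rcases Fin.lt_or_lt_of_ne hxy with h | h
  · exact ⟨x, y, h, Nat.lt_succ_iff.1 y.isLt, hw⟩
  · exact ⟨y, x, h, Nat.lt_succ_iff.1 x.isLt, hw.symm⟩

theorem exists_mpPow_le_cycle_add (A : Matrix (Fin n) (Fin n) Rmax) {q : ℕ} (hq : n ≤ q)
    (i j : Fin n) :
    ∃ d ∈ Icc 1 n, ∃ x, mpPow A q i j ≤ mpPow A d x x + mpPow A (q - d) i j := by
  by_cases hbot : mpPow A q i j = ⊥
  · exact ⟨1, mem_Icc.2 ⟨le_rfl, i.pos⟩, i, hbot ▸ bot_le⟩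
  obtain ⟨w, rfl, rfl, hw⟩ := exists_walkWeight_eq_mpPow hbot
  obtain ⟨a, b, hab, hbn, hwab⟩ := exists_lt_le_eq w
  obtain ⟨e, rfl⟩ := Nat.exists_eq_add_of_le hab.le
  obtain ⟨r, rfl⟩ := Nat.exists_eq_add_of_le (hbn.trans hq)
  refine ⟨e, mem_Icc.2 ⟨by omega, by omega⟩, w a, ?_⟩
  have hhead := walkWeight_le_mpPow A a w
  have hcycle := walkWeight_le_mpPow A e fun t => w (a + t)
  have htail := walkWeight_le_mpPow A r fun t => w (a + e + t)
  simp only [add_zero, ← hwab] at hcycle htail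
  calc mpPow A (a + e + r) (w 0) (w (a + e + r))
      = walkWeight A a w + (walkWeight A e fun t => w (a + t))
          + walkWeight A r fun t => w (a + e + t) := by
        rw [← hw, walkWeight_add, walkWeight_add]
    _ ≤ mpPow A a (w 0) (w a) + mpPow A e (w a) (w a) + mpPow A r (w a) (w (a + e + r)) := by
        gcongr
    _ = mpPow A e (w a) (w a) + (mpPow A a (w 0) (w a) + mpPow A r (w a) (w (a + e + r))) := by
        abel
    _ ≤ mpPow A e (w a) (w a) + mpPow A (a + e + r - e) (w 0) (w (a + e + r)) := by
        rw [show a + e + r - e = a + r by omega]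
        exact add_le_add_right (mpPow_add_le A a r _ _ _) _

theorem mpPow_le_sup_Icc {B : Matrix (Fin n) (Fin n) Rmax}
    (hdiag : ∀ d ∈ Icc 1 n, ∀ x, mpPow B d x x ≤ 0) {q : ℕ} (hq : 1 ≤ q) (i j : Fin n) :
    mpPow B q i j ≤ (Icc 1 n).sup fun p => mpPow B p i j := by
  induction q using Nat.strong_induction_on with
  | _ q ih =>
    by_cases hqn : q ≤ n
    · exact le_sup (f := fun p => mpPow B p i j) (mem_Icc.2 ⟨hq, hqn⟩)
    obtain ⟨d, hd, x, hle⟩ := exists_mpPow_le_cycle_add B (le_of_not_ge hqn) i j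
    obtain ⟨hd1, hdn⟩ := mem_Icc.1 hd
    calc mpPow B q i j ≤ mpPow B d x x + mpPow B (q - d) i j := hle
      _ ≤ 0 + (Icc 1 n).sup fun p => mpPow B p i j :=
        add_le_add (hdiag d hd x) (ih (q - d) (by omega) (by omega))
      _ = _ := zero_add _

theorem mpPow_eq_bot_of_diag_eq_bot {A : Matrix (Fin n) (Fin n) Rmax}
    (hdiag : ∀ d ∈ Icc 1 n, ∀ x, mpPow A d x x = ⊥) (i j : Fin n) :
    mpPow A n i j = ⊥ := by
  obtain ⟨d, hd, x, hle⟩ := exists_mpPow_le_cycle_add A le_rfl i j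
  rwa [hdiag d hd x, WithBot.bot_add, le_bot_iff] at hle

theorem exists_mpMulVec_eq_bot (hn : 0 < n) {A : Matrix (Fin n) (Fin n) Rmax}
    (hA : ∃ m, ∀ i j, mpPow A m i j = ⊥) :
    ∃ v : Fin n → Rmax, v ≠ (fun _ => ⊥) ∧ mpMulVec A v = fun _ => ⊥ := by
  classical
  have h0 : Nat.find hA ≠ 0 := fun h => by
    simpa [h, mpPow, mpId] using Nat.find_spec hA ⟨0, hn⟩ ⟨0, hn⟩
  obtain ⟨m, hm⟩ := Nat.exists_eq_succ_of_ne_zero h0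
  obtain ⟨i, j, hij⟩ : ∃ i j, mpPow A m i j ≠ ⊥ := by
    simpa using Nat.find_min hA (hm ▸ Nat.lt_succ_self m)
  refine ⟨fun k => mpPow A m k j, fun h => hij (congrFun h i), funext fun k => ?_⟩
  have := Nat.find_spec hA k j
  rwa [hm] at this

theorem exists_mpMulVec_eq_self {B : Matrix (Fin n) (Fin n) Rmax}
    (hdiag : ∀ d ∈ Icc 1 n, ∀ x, mpPow B d x x ≤ 0) {p₀ : ℕ} (hp₀ : p₀ ∈ Icc 1 n)
    {c : Fin n} (hc : mpPow B p₀ c c = 0) :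
    ∃ v : Fin n → Rmax, v ≠ (fun _ => ⊥) ∧ mpMulVec B v = v := by
  set v : Fin n → Rmax := fun i => (Icc 1 n).sup fun p => mpPow B p i c
  have hvc : 0 ≤ v c := hc ▸ le_sup (f := fun p => mpPow B p c c) hp₀
  refine ⟨v, fun h => ?_, funext fun i => le_antisymm ?_ ?_⟩
  · exact absurd (congrFun h c ▸ hvc) (by simp)
  · refine Finset.sup_le fun k _ => ?_
    rw [WithBot.add_finset_sup]
    refine Finset.sup_le fun p _ => ?_
    exact (le_mpMul B (mpPow B p) i k c).trans
      (mpPow_le_sup_Icc hdiag (Nat.le_add_left 1 p) i c)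
  · refine Finset.sup_le fun p hp => ?_
    obtain ⟨r, hr⟩ : ∃ r, p + p₀ = r + 1 + 1 := ⟨p + p₀ - 2, by grind⟩
    calc mpPow B p i c = mpPow B p i c + mpPow B p₀ c c := by rw [hc, add_zero]
      _ ≤ mpPow B (r + 1 + 1) i c := hr ▸ mpPow_add_le B p p₀ i c c
      _ = mpMul B (mpPow B (r + 1)) i c := rfl
      _ ≤ mpMulVec B v i := sup_mono_fun fun k _ =>
          add_le_add_right (mpPow_le_sup_Icc hdiag (Nat.le_add_left 1 r) k c) _

theorem exists_mpMulVec_eq_add_of_max_cycle_mean {A : Matrix (Fin n) (Fin n) Rmax} {μ : ℝ}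
    (hle : ∀ p ∈ Icc 1 n, ∀ x, mpPow A p x x ≤ ((p * μ : ℝ) : Rmax)) {p₀ : ℕ}
    (hp₀ : p₀ ∈ Icc 1 n) {c : Fin n} (hc : mpPow A p₀ c c = ((p₀ * μ : ℝ) : Rmax)) :
    ∃ v : Fin n → Rmax, v ≠ (fun _ => ⊥) ∧ mpMulVec A v = fun i => (μ : Rmax) + v i := by
  set B : Matrix (Fin n) (Fin n) Rmax := fun i j => A i j + ((-μ : ℝ) : Rmax)
  have hcancel (p : ℕ) : ((p * μ : ℝ) : Rmax) + ((p * -μ : ℝ) : Rmax) = 0 := by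
    rw [← WithBot.coe_add, mul_neg, add_neg_cancel, WithBot.coe_zero]
  have hdiag : ∀ p ∈ Icc 1 n, ∀ x, mpPow B p x x ≤ 0 := fun p hp x => by
    rw [mpPow_add_const, ← hcancel p]
    exact add_le_add_left (hle p hp x) _
  have hcrit : mpPow B p₀ c c = 0 := by rw [mpPow_add_const, hc, hcancel]
  obtain ⟨v, hv, hfix⟩ := exists_mpMulVec_eq_self hdiag hp₀ hcrit
  refine ⟨v, hv, funext fun i => ?_⟩
  have hA : A = fun i j => B i j + (μ : Rmax) := by
    funext i j
    rw [add_assoc, ← WithBot.coe_add, neg_add_cancel, WithBot.coe_zero, add_zero]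
  have := mpMulVec_add_const B v μ 0 i
  simp only [add_zero, ← hA] at this
  rw [this, hfix, add_comm]

end MaxPlus

/-- Every square max-plus matrix has at least one max-plus eigenvalue. -/
theorem mp_eigenvalue_exists {n : ℕ} (hn : 0 < n)
    (A : Matrix (Fin n) (Fin n) Rmax) :
    ∃ (l : Rmax) (v : Fin n → Rmax), v ≠ (fun _ => (⊥ : Rmax)) ∧
      mpMulVec A v = fun i => l + v i := by
  by_cases hcycle : ∃ x ∈ Icc 1 n ×ˢ univ, mpPow A x.1 x.2 x.2 ≠ ⊥
  · obtain ⟨μ, hle, ⟨p₀, c⟩, hp₀c, hc⟩ := exists_max_mean (w := Prod.fst)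
      (fun x hx => (mem_Icc.1 (mem_product.1 hx).1).1) hcycle
    exact ⟨μ, exists_mpMulVec_eq_add_of_max_cycle_mean
      (fun p hp x => hle (p, x) (mem_product.2 ⟨hp, mem_univ x⟩)) (mem_product.1 hp₀c).1 hc⟩
  · push Not at hcycle
    obtain ⟨v, hv, hAv⟩ := exists_mpMulVec_eq_bot hn ⟨n, mpPow_eq_bot_of_diag_eq_bot
      fun d hd x => hcycle (d, x) (mem_product.2 ⟨hd, mem_univ x⟩)⟩
    exact ⟨⊥, v, hv, by simpa using hAv⟩
end

section
/- For an irreducible matrix A ∈ Rmax^{n×n}, the max-plus eigenvalue is unique: if A ⊗ v = λ ⊗ v and A ⊗ w = μ ⊗ w with v, w not identically -∞, then λ = μ. -/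
section MaxPlus

variable {n : ℕ} (A : Matrix (Fin n) (Fin n) Rmax)

theorem le_mpMulVec (v : Fin n → Rmax) (i k : Fin n) : A i k + v k ≤ mpMulVec A v i :=
  Finset.le_sup (f := fun k => A i k + v k) (Finset.mem_univ k)

theorem mpMulVec_le_const_add {v w : Fin n → Rmax} (c : Rmax) (hle : ∀ k, v k ≤ c + w k)
    (i : Fin n) : mpMulVec A v i ≤ c + mpMulVec A w i :=
  Finset.sup_le fun k _ =>
    calc A i k + v k ≤ A i k + (c + w k) := add_le_add_right (hle k) _
      _ = c + (A i k + w k) := add_left_comm _ _ _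
      _ ≤ c + mpMulVec A w i := add_le_add_right (le_mpMulVec A w i k) _

theorem eq_of_mpId_ne_bot {i j : Fin n} (h : mpId n i j ≠ ⊥) : i = j := by
  by_contra hij
  exact h (if_neg hij)

theorem exists_of_mpPow_succ_ne_bot {p : ℕ} {i j : Fin n} (h : mpPow A (p + 1) i j ≠ ⊥) :
    ∃ k, A i k ≠ ⊥ ∧ mpPow A p k j ≠ ⊥ := by
  obtain ⟨k, -, hk⟩ : ∃ k ∈ Finset.univ, A i k + mpPow A p k j ≠ ⊥ := by
    by_contra! hbot
    exact h ((Finset.sup_eq_bot_iff _ _).mpr hbot)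
  exact ⟨k, WithBot.add_ne_bot.mp hk⟩

section Eigenvector

variable {l : Rmax} {v : Fin n → Rmax} (hAv : mpMulVec A v = fun i => l + v i)
include hAv

theorem eigenvector_ne_bot_of_ne_bot {i k : Fin n} (hik : A i k ≠ ⊥) (hk : v k ≠ ⊥) :
    v i ≠ ⊥ := by
  have : A i k + v k ≤ l + v i := congrFun hAv i ▸ le_mpMulVec A v i k
  exact (WithBot.add_ne_bot.mp (ne_bot_of_le_ne_bot (WithBot.add_ne_bot.mpr ⟨hik, hk⟩) this)).2

theorem eigenvector_ne_bot_of_mpPow_ne_bot {j : Fin n} (hj : v j ≠ ⊥) :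
    ∀ (p : ℕ) {i : Fin n}, mpPow A p i j ≠ ⊥ → v i ≠ ⊥
  | 0, _, hij => eq_of_mpId_ne_bot hij ▸ hj
  | p + 1, _, hij => by
    obtain ⟨k, hik, hkj⟩ := exists_of_mpPow_succ_ne_bot A hij
    exact eigenvector_ne_bot_of_ne_bot A hAv hik (eigenvector_ne_bot_of_mpPow_ne_bot hj p hkj)

theorem mpIrreducible.eigenvector_ne_bot (hA : mpIrreducible A) (hv : v ≠ fun _ => ⊥)
    (i : Fin n) : v i ≠ ⊥ := by
  obtain ⟨j, hj⟩ := Function.ne_iff.mp hv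
  by_cases hij : i = j
  · exact hij ▸ hj
  · obtain ⟨p, -, hp⟩ := hA i j hij
    exact eigenvector_ne_bot_of_mpPow_ne_bot A hAv hj p hp

end Eigenvector

theorem eigenvalue_le_of_le_const_add {l m c : Rmax} {v w : Fin n → Rmax}
    (hAv : mpMulVec A v = fun i => l + v i) (hAw : mpMulVec A w = fun i => m + w i)
    (hle : ∀ k, v k ≤ c + w k) {i₀ : Fin n} (heq : v i₀ = c + w i₀) (hi₀ : v i₀ ≠ ⊥) :
    l ≤ m := by
  have key : l + v i₀ ≤ m + v i₀ :=
    calc l + v i₀ = mpMulVec A v i₀ := (congrFun hAv i₀).symm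
      _ ≤ c + mpMulVec A w i₀ := mpMulVec_le_const_add A c hle i₀
      _ = m + v i₀ := by rw [hAw, heq, add_left_comm]
  exact (WithBot.add_le_add_iff_right hi₀).mp key

end MaxPlus

theorem WithBot.exists_le_const_add_eq {ι : Type*} [Finite ι] [Nonempty ι]
    {v w : ι → WithBot ℝ} (hv : ∀ i, v i ≠ ⊥) (hw : ∀ i, w i ≠ ⊥) :
    ∃ c : ℝ, (∀ i, v i ≤ c + w i) ∧ ∃ i₀, v i₀ = c + w i₀ := by
  choose v' hv' using fun i => WithBot.ne_bot_iff_exists.mp (hv i)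
  choose w' hw' using fun i => WithBot.ne_bot_iff_exists.mp (hw i)
  obtain ⟨i₀, hi₀⟩ := Finite.exists_max fun i => v' i - w' i
  refine ⟨v' i₀ - w' i₀, fun i => ?_, i₀, ?_⟩
  · rw [← hv', ← hw', ← WithBot.coe_add, WithBot.coe_le_coe]
    linarith [hi₀ i]
  · rw [← hv', ← hw', ← WithBot.coe_add, sub_add_cancel]

/-- An irreducible matrix has a unique max-plus eigenvalue. -/
theorem mp_irreducible_eigenvalue_unique {n : ℕ}
    (A : Matrix (Fin n) (Fin n) Rmax) (hA : mpIrreducible A)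
    (l m : Rmax) (v w : Fin n → Rmax)
    (hv : v ≠ fun _ => (⊥ : Rmax)) (hw : w ≠ fun _ => (⊥ : Rmax))
    (h1 : mpMulVec A v = fun i => l + v i)
    (h2 : mpMulVec A w = fun i => m + w i) :
    l = m := by
  have : Nonempty (Fin n) := ⟨(Function.ne_iff.mp hv).choose⟩
  have hv_fin := hA.eigenvector_ne_bot A h1 hv
  have hw_fin := hA.eigenvector_ne_bot A h2 hw
  obtain ⟨c, hvw, i, hi⟩ := WithBot.exists_le_const_add_eq hv_fin hw_fin
  obtain ⟨d, hwv, j, hj⟩ := WithBot.exists_le_const_add_eq hw_fin hv_fin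
  exact le_antisymm (eigenvalue_le_of_le_const_add A h1 h2 hvw hi (hv_fin i))
    (eigenvalue_le_of_le_const_add A h2 h1 hwv hj (hw_fin j))
end

section
/- Let A ∈ Rmax^{n×n} and let λ_max be the maximal average weight |c|_w / |c|_l over all elementary circuits c of the precedence graph G(A) (assuming at least one circuit exists). Then λ_max is a max-plus eigenvalue of A. -/
/-! Subtracting `λ_max` from every entry gives a matrix `B` all of whose circuits have
nonpositive weight (a circuit splits into elementary ones), and a node `η` on a circuit of
weight `0`. Deleting a circuit from a path of length `> n` therefore does not decrease its
weight, so `B^{⊗p} ≤ B⁺ := B ⊕ ⋯ ⊕ B^{⊗n}` for every `p ≥ 1`, whence `B ⊗ B⁺ ≤ B⁺`. As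
`[B⁺]_{ηη} ≥ 0`, also `B⁺ ≤ B ⊗ B⁺` in column `η`, so that column is a max-plus eigenvector of
`B` for `0`, i.e. of `A` for `λ_max`. -/

open Finset

section Loops

variable {α : Type*}

def removeLoop (g : ℕ → α) (a q : ℕ) : ℕ → α :=
  fun k => if k ≤ a then g k else g (k + q)

theorem removeLoop_zero (g : ℕ → α) (a q : ℕ) : removeLoop g a q 0 = g 0 :=
  if_pos (Nat.zero_le a)

theorem removeLoop_add {g : ℕ → α} {a q : ℕ} (h : g a = g (a + q)) (r : ℕ) :
    removeLoop g a q (a + r) = g (a + q + r) := by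
  unfold removeLoop
  split_ifs with hr
  · obtain rfl : r = 0 := by omega
    simpa using h
  · rw [Nat.add_right_comm]

theorem exists_loop_of_not_injOn {g : ℕ → α} {p : ℕ} (h : ¬ Set.InjOn g (Set.Iio p)) :
    ∃ a q, 0 < q ∧ a + q < p ∧ g a = g (a + q) := by
  simp only [Set.InjOn, Set.mem_Iio, not_forall] at h
  obtain ⟨x, hx, y, hy, hxy, hne⟩ := h
  rcases Nat.lt_or_gt_of_ne hne with hlt | hlt
  · exact ⟨x, y - x, by omega, by omega, by rwa [Nat.add_sub_cancel' hlt.le]⟩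
  · exact ⟨y, x - y, by omega, by omega, by rw [Nat.add_sub_cancel' hlt.le, hxy]⟩

theorem not_injOn_Iio_of_card_lt [Fintype α] {p : ℕ} (hp : Fintype.card α < p) (g : ℕ → α) :
    ¬ Set.InjOn g (Set.Iio p) := fun hinj => by
  have := card_le_card_of_injOn g (s := range p) (t := univ) (fun _ _ => mem_univ _)
    (by rwa [coe_range])
  rw [card_range, card_univ] at this
  omega

end Loops

theorem Rmax.add_finsetSup {α : Type*} (s : Finset α) (f : α → Rmax) (c : Rmax) :
    c + s.sup f = s.sup fun x => c + f x :=
  apply_sup_eq_sup_comp (c + ·) (fun x y => (max_add_add_left c x y).symm) (WithBot.add_bot c)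

section Paths

variable {n : ℕ} (A : Matrix (Fin n) (Fin n) Rmax)

def mpPathWeight (p : ℕ) (g : ℕ → Fin n) : Rmax :=
  ∑ k ∈ range p, A (g (k + 1)) (g k)

theorem mpPathWeight_congr {p : ℕ} {g g' : ℕ → Fin n} (h : ∀ k ≤ p, g k = g' k) :
    mpPathWeight A p g = mpPathWeight A p g' :=
  sum_congr rfl fun k hk => by
    rw [mem_range] at hk
    rw [h k hk.le, h (k + 1) hk]

theorem mpPathWeight_add (p q : ℕ) (g : ℕ → Fin n) :
    mpPathWeight A (p + q) g = mpPathWeight A p g + mpPathWeight A q (fun k => g (p + k)) := by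
  simp only [mpPathWeight, sum_range_add, add_assoc]

theorem mpPathWeight_succ (p : ℕ) (g : ℕ → Fin n) :
    mpPathWeight A (p + 1) g = A (g (p + 1)) (g p) + mpPathWeight A p g := by
  rw [mpPathWeight, sum_range_succ, add_comm]; rfl

theorem mpPathWeight_le_mpPow (p : ℕ) (g : ℕ → Fin n) :
    mpPathWeight A p g ≤ mpPow A p (g p) (g 0) := by
  induction p with
  | zero => simp [mpPathWeight, mpPow, mpId]
  | succ p ih =>
    rw [mpPathWeight_succ]
    exact (add_le_add_right ih _).trans
      (le_sup (f := fun k => A (g (p + 1)) k + mpPow A p k (g 0)) (mem_univ (g p)))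

theorem exists_mpPathWeight_eq_mpPow {p : ℕ} {i j : Fin n} (hp : mpPow A p i j ≠ ⊥) :
    ∃ g : ℕ → Fin n, g 0 = j ∧ g p = i ∧ mpPathWeight A p g = mpPow A p i j := by
  induction p generalizing i with
  | zero =>
    obtain rfl : i = j := by
      by_contra hij
      simp [mpPow, mpId, hij] at hp
    exact ⟨fun _ => i, rfl, rfl, by simp [mpPathWeight, mpPow, mpId]⟩
  | succ p ih =>
    obtain ⟨k, -, hk⟩ := exists_mem_eq_sup univ ⟨i, mem_univ i⟩ fun k => A i k + mpPow A p k j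
    have hpk : mpPow A p k j ≠ ⊥ := fun hbot => hp <| by
      change mpMul A (mpPow A p) i j = ⊥
      rw [mpMul, hk, hbot, WithBot.add_bot]
    obtain ⟨g, hg0, hgp, hgw⟩ := ih hpk
    refine ⟨fun m => if m ≤ p then g m else i, by simp [hg0], by simp, ?_⟩
    rw [mpPathWeight_succ, mpPathWeight_congr A (g' := g) fun m hm => if_pos hm]
    simp only [if_neg (Nat.not_succ_le_self p), if_pos le_rfl, hgp, hgw]
    exact hk.symm

end Paths

section Circuits

variable {n : ℕ} (A : Matrix (Fin n) (Fin n) Rmax)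

theorem mpPathWeight_eq_add_removeLoop {g : ℕ → Fin n} {a q : ℕ} (h : g a = g (a + q))
    (r : ℕ) : mpPathWeight A (a + q + r) g =
      mpPathWeight A q (fun k => g (a + k)) + mpPathWeight A (a + r) (removeLoop g a q) := by
  rw [mpPathWeight_add A (a + q), mpPathWeight_add A a, mpPathWeight_add A a,
    mpPathWeight_congr A (g := removeLoop g a q) (g' := g) fun k hk => if_pos hk,
    mpPathWeight_congr A (g := fun k => removeLoop g a q (a + k))
      (g' := fun k => g (a + q + k)) fun k _ => removeLoop_add h k]
  abel

def MpCircuitsNonpos : Prop :=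
  ∀ p (g : ℕ → Fin n), 0 < p → g p = g 0 → mpPathWeight A p g ≤ 0

theorem mpCircuitsNonpos_of_injOn
    (hA : ∀ p (g : ℕ → Fin n), 0 < p → g p = g 0 → Set.InjOn g (Set.Iio p) →
      mpPathWeight A p g ≤ 0) :
    MpCircuitsNonpos A := by
  intro p
  induction p using Nat.strong_induction_on with
  | _ p ih =>
  intro g hp hclosed
  by_cases hinj : Set.InjOn g (Set.Iio p)
  · exact hA p g hp hclosed hinj
  obtain ⟨a, q, hq, hqp, hloop⟩ := exists_loop_of_not_injOn hinj
  obtain ⟨r, rfl⟩ : ∃ r, p = a + q + r := ⟨p - (a + q), by omega⟩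
  rw [mpPathWeight_eq_add_removeLoop A hloop]
  refine add_nonpos (ih q (by omega) _ hq (by simpa using hloop.symm))
    (ih (a + r) (by omega) _ (by omega) ?_)
  rw [removeLoop_add hloop, removeLoop_zero, hclosed]

/-- The max-plus Kleene plus `A⁺ = A ⊕ A^{⊗2} ⊕ ⋯ ⊕ A^{⊗n}`. -/
def mpPlus : Matrix (Fin n) (Fin n) Rmax :=
  fun i j => (Icc 1 n).sup fun p => mpPow A p i j

variable {A}

theorem mpPow_le_mpPlus (hA : MpCircuitsNonpos A) {p : ℕ} (hp : 0 < p) (i j : Fin n) :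
    mpPow A p i j ≤ mpPlus A i j := by
  induction p using Nat.strong_induction_on generalizing i with
  | _ p ih =>
  by_cases hpn : p ≤ n
  · exact le_sup (f := fun p => mpPow A p i j) (mem_Icc.mpr ⟨hp, hpn⟩)
  by_cases hbot : mpPow A p i j = ⊥
  · simp [hbot]
  obtain ⟨g, hg0, hgp, hgw⟩ := exists_mpPathWeight_eq_mpPow A hbot
  obtain ⟨a, q, hq, hqn, hloop⟩ :=
    exists_loop_of_not_injOn (not_injOn_Iio_of_card_lt (p := n + 1) (by simp) g)
  obtain ⟨r, rfl⟩ : ∃ r, p = a + q + r := ⟨p - (a + q), by omega⟩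
  calc mpPow A (a + q + r) i j
      = mpPathWeight A q (fun k => g (a + k)) + mpPathWeight A (a + r) (removeLoop g a q) := by
        rw [← hgw, mpPathWeight_eq_add_removeLoop A hloop]
    _ ≤ 0 + mpPow A (a + r) i j := by
        refine add_le_add (hA q _ hq (by simpa using hloop.symm)) ?_
        simpa [removeLoop_add hloop, removeLoop_zero, hg0, hgp]
          using mpPathWeight_le_mpPow A (a + r) (removeLoop g a q)
    _ ≤ mpPlus A i j := by
        rw [zero_add]
        exact ih (a + r) (by omega) (by omega) i

end Circuits

section Eigenvector

variable {n : ℕ} {A : Matrix (Fin n) (Fin n) Rmax}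

theorem mpPow_le_mpPlus_of_nonneg (hA : MpCircuitsNonpos A) {j : Fin n}
    (hj : 0 ≤ mpPlus A j j) (p : ℕ) (i : Fin n) : mpPow A p i j ≤ mpPlus A i j := by
  rcases Nat.eq_zero_or_pos p with rfl | hp
  · change mpId n i j ≤ _
    unfold mpId
    split_ifs with hij
    · rwa [hij]
    · exact bot_le
  · exact mpPow_le_mpPlus hA hp i j

theorem mpMulVec_mpPlus_le (hA : MpCircuitsNonpos A) (j i : Fin n) :
    mpMulVec A (fun k => mpPlus A k j) i ≤ mpPlus A i j :=
  Finset.sup_le fun k _ => by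
    change A i k + mpPlus A k j ≤ _
    rw [mpPlus, Rmax.add_finsetSup]
    exact Finset.sup_le fun p _ =>
      (le_sup (f := fun k => A i k + mpPow A p k j) (mem_univ k)).trans
        (mpPow_le_mpPlus hA p.succ_pos i j)

theorem le_mpMulVec_mpPlus (hA : MpCircuitsNonpos A) {j : Fin n} (hj : 0 ≤ mpPlus A j j)
    (i : Fin n) : mpPlus A i j ≤ mpMulVec A (fun k => mpPlus A k j) i :=
  Finset.sup_le fun p hp => by
    obtain ⟨q, rfl⟩ : ∃ q, p = q + 1 := ⟨p - 1, by have := (mem_Icc.mp hp).1; omega⟩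
    exact Finset.sup_mono_fun (s := univ) (f := fun k => A i k + mpPow A q k j)
      fun k _ => add_le_add_right (mpPow_le_mpPlus_of_nonneg hA hj q k) _

theorem mpMulVec_mpPlus_col (hA : MpCircuitsNonpos A) {j : Fin n} (hj : 0 ≤ mpPlus A j j) :
    mpMulVec A (fun k => mpPlus A k j) = fun i => mpPlus A i j :=
  funext fun i => (mpMulVec_mpPlus_le hA j i).antisymm (le_mpMulVec_mpPlus hA hj i)

end Eigenvector

section Shift

variable {n : ℕ} {A : Matrix (Fin n) (Fin n) Rmax}

variable (A) in
def mpShift (c : ℝ) : Matrix (Fin n) (Fin n) Rmax :=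
  fun i j => A i j + (c : Rmax)

theorem mpPathWeight_mpShift (c : ℝ) (p : ℕ) (g : ℕ → Fin n) :
    mpPathWeight (mpShift A c) p g = mpPathWeight A p g + ((p * c : ℝ) : Rmax) := by
  simp only [mpPathWeight, mpShift, sum_add_distrib, sum_const, card_range,
    ← WithBot.coe_nsmul, nsmul_eq_mul]

theorem mpMulVec_mpShift (c : ℝ) (v : Fin n → Rmax) (i : Fin n) :
    mpMulVec (mpShift A c) v i = c + mpMulVec A v i := by
  simp only [mpMulVec, mpShift, Rmax.add_finsetSup]
  exact sup_congr rfl fun k _ => by abel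

theorem mpMulVec_eq_of_mpMulVec_mpShift_neg {c : ℝ} {v : Fin n → Rmax}
    (hv : mpMulVec (mpShift A (-c)) v = v) : mpMulVec A v = fun i => c + v i :=
  funext fun i => by
    have hvi := congrFun hv i
    rw [mpMulVec_mpShift] at hvi
    rw [← hvi, ← add_assoc, ← WithBot.coe_add, add_neg_cancel, WithBot.coe_zero, zero_add]

end Shift

section CircuitMeans

variable {n : ℕ} {A : Matrix (Fin n) (Fin n) Rmax}

variable (A) in
def mpCircuitMeans : Set ℝ :=
  {r : ℝ | ∃ l : ℕ, 1 ≤ l ∧ ∃ v : Fin (l + 1) → Fin n,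
    v 0 = v (Fin.last l) ∧
    Function.Injective (fun k : Fin l => v k.castSucc) ∧
    (∑ k : Fin l, A (v k.succ) (v k.castSucc)) = (((l : ℝ) * r : ℝ) : Rmax)}

theorem mpPathWeight_le_of_mem_upperBounds {lmax : ℝ}
    (hmax : lmax ∈ upperBounds (mpCircuitMeans A)) {p : ℕ} {g : ℕ → Fin n} (hp : 0 < p)
    (hclosed : g p = g 0) (hinj : Set.InjOn g (Set.Iio p)) :
    mpPathWeight A p g ≤ ((p * lmax : ℝ) : Rmax) := by
  cases hw : mpPathWeight A p g using WithBot.recBotCoe with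
  | bot => exact bot_le
  | coe w =>
    have hp' : (0 : ℝ) < p := by exact_mod_cast hp
    have hmean : w / p ∈ mpCircuitMeans A := by
      refine ⟨p, hp, fun k => g k, hclosed.symm,
        fun x y hxy => Fin.ext (hinj x.isLt y.isLt hxy), ?_⟩
      simp only [Fin.val_succ, Fin.val_castSucc]
      rw [Fin.sum_univ_eq_sum_range (fun k => A (g (k + 1)) (g k)), ← mpPathWeight, hw,
        mul_div_cancel₀ _ hp'.ne']
    exact WithBot.coe_le_coe.mpr ((div_le_iff₀' hp').mp (hmax hmean))

open Fin.NatCast in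
theorem exists_closed_path_of_mem_mpCircuitMeans {r : ℝ} (hr : r ∈ mpCircuitMeans A) :
    ∃ p, ∃ g : ℕ → Fin n, 0 < p ∧ g p = g 0 ∧ mpPathWeight A p g = ((p * r : ℝ) : Rmax) := by
  obtain ⟨l, hl, v, hv0, -, hw⟩ := hr
  refine ⟨l, fun k => v (k : Fin (l + 1)), hl, ?_, ?_⟩
  · simp [hv0]
  rw [← hw, mpPathWeight, ← Fin.sum_univ_eq_sum_range (fun k => A (v (k + 1 : ℕ)) (v k))]
  simp

theorem mpCircuitsNonpos_mpShift_neg {lmax : ℝ}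
    (hmax : lmax ∈ upperBounds (mpCircuitMeans A)) :
    MpCircuitsNonpos (mpShift A (-lmax)) :=
  mpCircuitsNonpos_of_injOn _ fun p g hp hclosed hinj => by
    rw [mpPathWeight_mpShift]
    calc mpPathWeight A p g + ((p * -lmax : ℝ) : Rmax)
        ≤ ((p * lmax : ℝ) : Rmax) + ((p * -lmax : ℝ) : Rmax) :=
          add_le_add_left (mpPathWeight_le_of_mem_upperBounds hmax hp hclosed hinj) _
      _ = 0 := by rw [← WithBot.coe_add, mul_neg, add_neg_cancel, WithBot.coe_zero]

theorem exists_nonneg_mpPlus_mpShift_neg {lmax : ℝ} (h : IsGreatest (mpCircuitMeans A) lmax) :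
    ∃ j, 0 ≤ mpPlus (mpShift A (-lmax)) j j := by
  obtain ⟨p, g, hp, hclosed, hw⟩ := exists_closed_path_of_mem_mpCircuitMeans h.1
  refine ⟨g 0, ?_⟩
  calc 0 = mpPathWeight (mpShift A (-lmax)) p g := by
        rw [mpPathWeight_mpShift, hw, ← WithBot.coe_add, mul_neg, add_neg_cancel,
          WithBot.coe_zero]
    _ ≤ mpPow (mpShift A (-lmax)) p (g 0) (g 0) := by
        simpa [hclosed] using mpPathWeight_le_mpPow (mpShift A (-lmax)) p g
    _ ≤ mpPlus (mpShift A (-lmax)) (g 0) (g 0) :=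
        mpPow_le_mpPlus (mpCircuitsNonpos_mpShift_neg h.2) hp _ _

end CircuitMeans

/-- The maximal average weight over all elementary circuits of the precedence
graph of A is a max-plus eigenvalue of A. -/
theorem mp_max_cycle_mean_eigenvalue {n : ℕ} (A : Matrix (Fin n) (Fin n) Rmax)
    (lmax : ℝ)
    (h : IsGreatest {r : ℝ | ∃ l : ℕ, 1 ≤ l ∧ ∃ v : Fin (l + 1) → Fin n,
        v 0 = v (Fin.last l) ∧
        Function.Injective (fun k : Fin l => v k.castSucc) ∧
        (∑ k : Fin l, A (v k.succ) (v k.castSucc)) = (((l : ℝ) * r : ℝ) : Rmax)}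
      lmax) :
    ∃ v : Fin n → Rmax, v ≠ (fun _ => (⊥ : Rmax)) ∧
      mpMulVec A v = fun i => (lmax : Rmax) + v i := by
  have hmax : IsGreatest (mpCircuitMeans A) lmax := h
  obtain ⟨j, hj⟩ := exists_nonneg_mpPlus_mpShift_neg hmax
  refine ⟨fun i => mpPlus (mpShift A (-lmax)) i j, fun hbot => ?_,
    mpMulVec_eq_of_mpMulVec_mpShift_neg
      (mpMulVec_mpPlus_col (mpCircuitsNonpos_mpShift_neg hmax.2) hj)⟩
  rw [congrFun hbot j] at hj
  exact absurd hj (by simp)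
end
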